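/- arXiv:2510.03923 — 3 statements merged into one kernel-verified Lean document; each statement's English description precedes it below -/
import Mathlib

section
/- Let a > 0 and b, c ≥ 0, and let u : [0,∞) → [0,∞) be a continuous function satisfying u(t) ≤ c + ∫₀ᵗ ( a u(s) + b u(s)^{1/2} ) ds for all t ≥ 0. Then for all t ≥ 0, u(t) ≤ ( c^{1/2} exp(at/2) + b (exp(at/2) − 1)/a )². -/
open MeasureTheory Filter Set
open scoped ENNReal NNReal

noncomputable section

/-- Lebesgue measure restricted to the unit interval `I = [0,1]`. -/
def μI : Measure ℝ := volume.restrict (Set.Icc (0:ℝ) 1)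

/-- Lebesgue measure restricted to the unit square `I² = [0,1]²`. -/
def μI2 : Measure (ℝ × ℝ) := volume.restrict ((Set.Icc (0:ℝ) 1) ×ˢ (Set.Icc (0:ℝ) 1))

/-- The graphon integral operator `(T_W x)(v) = ∫_I W(u,v) x(u) du`. -/
def graphonOp (W : ℝ → ℝ → ℝ) (x : ℝ → ℝ) : ℝ → ℝ :=
  fun v => ∫ u in Set.Icc (0:ℝ) 1, W u v * x u

/-- `k`-fold composition `T_W^k` (identity for `k = 0`). -/
def graphonIter (W : ℝ → ℝ → ℝ) (k : ℕ) (x : ℝ → ℝ) : ℝ → ℝ :=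
  (graphonOp W)^[k] x

/-- `ρ` is normalized Lipschitz: `|ρ x − ρ y| ≤ |x − y|` and `ρ 0 = 0`. -/
def NormalizedLipschitz (ρ : ℝ → ℝ) : Prop :=
  (∀ x y : ℝ, |ρ x - ρ y| ≤ |x - y|) ∧ ρ 0 = 0

/-- One layer of a graphon neural network. -/
def gnnLayer (F K : ℕ) (W : ℝ → ℝ → ℝ) (ρ : ℝ → ℝ)
    (h : Fin F → Fin F → Fin K → ℝ) (X : Fin F → ℝ → ℝ) : Fin F → ℝ → ℝ :=
  fun f u => ρ (∑ g : Fin F, ∑ k : Fin K, h f g k * graphonIter W (k : ℕ) (X g) u)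

/-- The `L`-layer graphon neural network `Φ(W; X; h)`. -/
def gnn (F K L : ℕ) (W : ℝ → ℝ → ℝ) (ρ : ℝ → ℝ)
    (h : Fin L → Fin F → Fin F → Fin K → ℝ) (X : Fin F → ℝ → ℝ) : Fin F → ℝ → ℝ :=
  (List.ofFn h).foldl (fun Y hl => gnnLayer F K W ρ hl Y) X

/-- The mixed norm `‖X‖_{L^p(I;ℝ^F)} = (∑_f ‖X_f‖_{L^p(I)}²)^{1/2}`. -/
def vecLpNorm (F : ℕ) (p : ℝ≥0∞) (X : Fin F → ℝ → ℝ) : ℝ :=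
  Real.sqrt (∑ f : Fin F, ((eLpNorm (X f) p μI).toReal) ^ 2)

/-- `X : ℝ → L^∞(I;ℝ^F)` is, on `[0,T]`, a continuously differentiable solution of the
Graphon-NDE `dX/dt(t) = Φ(W; X(t); H(t))`, `X(0) = Z`, in the Banach space `L^∞(I;ℝ^F)`. -/
def IsGNDESolution (F K L : ℕ) (T : ℝ) (W : ℝ → ℝ → ℝ) (ρ : ℝ → ℝ)
    (H : ℝ → Fin L → Fin F → Fin F → Fin K → ℝ) (Z : Fin F → ℝ → ℝ)
    (X : ℝ → Fin F → Lp ℝ ⊤ μI) : Prop :=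
  (∀ f, (X 0 f : ℝ → ℝ) =ᵐ[μI] Z f) ∧
  ∃ X' : ℝ → Fin F → Lp ℝ ⊤ μI,
    ContinuousOn X' (Set.Icc 0 T) ∧
    ∀ t ∈ Set.Icc (0:ℝ) T,
      HasDerivWithinAt X (X' t) (Set.Icc 0 T) t ∧
      ∀ f, (X' t f : ℝ → ℝ) =ᵐ[μI]
        gnn F K L W ρ (H t) (fun g => (X t g : ℝ → ℝ)) f

/-- Operator norm (from `L²(I)` to `L²(I)`) of the difference `T_W − T_{W'}`. -/
def graphonOpNormSub (W W' : ℝ → ℝ → ℝ) : ℝ :=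
  ⨆ x : {x : ℝ → ℝ // MemLp x 2 μI ∧ eLpNorm x 2 μI ≤ 1},
    (eLpNorm (fun v => graphonOp W x v - graphonOp W' x v) 2 μI).toReal

/-- Left endpoint `u_i = (i−1)/n` of the cell `I_i` containing `u`. -/
def stepPt (n : ℕ) (u : ℝ) : ℝ := (⌊(n : ℝ) * u⌋ : ℝ) / n

/-- Sampled step kernel: `Wₙ(u,v) = W(u_i,u_j)` for `(u,v) ∈ I_i × I_j`. -/
def sampKernel (W : ℝ → ℝ → ℝ) (n : ℕ) : ℝ → ℝ → ℝ :=
  fun u v => W (stepPt n u) (stepPt n v)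

/-- Sampled step datum: `Zₙ(u) = Z(u_i)` for `u ∈ I_i`. -/
def sampDatum (F : ℕ) (Z : Fin F → ℝ → ℝ) (n : ℕ) : Fin F → ℝ → ℝ :=
  fun f u => Z f (stepPt n u)

/-- Support `W⁺ = {(u,v) ∈ I² : W(u,v) = 1}`. -/
def supportSet (W : ℝ → ℝ → ℝ) : Set (ℝ × ℝ) :=
  {p : ℝ × ℝ | p.1 ∈ Set.Icc (0:ℝ) 1 ∧ p.2 ∈ Set.Icc (0:ℝ) 1 ∧ W p.1 p.2 = 1}

/-- The cell `I_i = [u_i, u_i + 1/n)` containing `u`. -/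
def cell (n : ℕ) (u : ℝ) : Set ℝ := Set.Ico (stepPt n u) (stepPt n u + 1 / n)

open scoped Classical in
/-- Cell-intersection step kernel: `Wₙ = 1` on `I_i × I_j` iff `(I_i × I_j) ∩ W⁺ ≠ ∅`. -/
def interKernel (W : ℝ → ℝ → ℝ) (n : ℕ) : ℝ → ℝ → ℝ :=
  fun u v => if ((cell n u ×ˢ cell n v) ∩ supportSet W).Nonempty then 1 else 0

/-- Cell-average step datum: `Zₙ(u) = n ∫_{I_i} Z(v) dv` for `u ∈ I_i`. -/
def cellAvg (F : ℕ) (Z : Fin F → ℝ → ℝ) (n : ℕ) : Fin F → ℝ → ℝ :=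
  fun f u => (n : ℝ) * ∫ v in cell n u, Z f v

/-- Number of closed `δ`-mesh squares `[iδ,(i+1)δ] × [jδ,(j+1)δ]`, `i,j ∈ ℤ`, meeting `Ω`. -/
def meshCount (δ : ℝ) (Ω : Set (ℝ × ℝ)) : ℕ :=
  Set.ncard {p : ℤ × ℤ |
    ((Set.Icc ((p.1 : ℝ) * δ) (((p.1 : ℝ) + 1) * δ) ×ˢ
      Set.Icc ((p.2 : ℝ) * δ) (((p.2 : ℝ) + 1) * δ)) ∩ Ω).Nonempty}

/-- Upper box-counting dimension `limsup_{δ→0⁺} log N_δ(Ω) / (−log δ)`. -/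
def upperBoxDim (Ω : Set (ℝ × ℝ)) : ℝ :=
  Filter.limsup (fun δ : ℝ => Real.log (meshCount δ Ω) / (-Real.log δ))
    (nhdsWithin 0 (Set.Ioi 0))

end

/-!
For `ε > 0` the function `v = c + ε + ∫₀ᵗ (a u + b √u)` dominates `u`, is positive, and satisfies
`v' ≤ a v + b √v`; hence `w = √v` satisfies the linear differential inequality `w' ≤ (a/2) w + b/2`,
and the classical Grönwall bound for `w` squares to the claimed bound with `c + ε` in place of `c`.
Letting `ε → 0` finishes the proof; the `ε` only keeps `v` away from `0`, where `√` is not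
differentiable.
-/

open Real

theorem sqrt_le_gronwallBound_of_deriv_le {v v' : ℝ → ℝ} {a b t₀ t : ℝ}
    (hv : ContinuousOn v (Icc t₀ t)) (hpos : ∀ x ∈ Ico t₀ t, 0 < v x)
    (hderiv : ∀ x ∈ Ico t₀ t, HasDerivWithinAt v (v' x) (Ici x) x)
    (hle : ∀ x ∈ Ico t₀ t, v' x ≤ a * v x + b * √(v x)) :
    ∀ x ∈ Icc t₀ t, √(v x) ≤ gronwallBound √(v t₀) (a / 2) (b / 2) (x - t₀) := by
  refine le_gronwallBound_of_liminf_deriv_right_le (f' := fun x => v' x / (2 * √(v x)))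
    hv.sqrt (fun x hx _ hr => ((hderiv x hx).sqrt (hpos x hx).ne').liminf_right_slope_le hr)
    le_rfl fun x hx => ?_
  have hsqrt : 0 < √(v x) := sqrt_pos.2 (hpos x hx)
  rw [div_le_iff₀ (by positivity)]
  calc v' x ≤ a * v x + b * √(v x) := hle x hx
    _ = (a / 2 * √(v x) + b / 2) * (2 * √(v x)) := by
      linear_combination (-a) * mul_self_sqrt (hpos x hx).le

theorem le_sq_gronwallBound_of_le_add_integral {u : ℝ → ℝ} {a b c : ℝ} (ha : 0 ≤ a)
    (hb : 0 ≤ b) (hc : 0 < c) (hu : ContinuousOn u (Ici 0)) (hu0 : ∀ t, 0 ≤ t → 0 ≤ u t)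
    (hineq : ∀ t, 0 ≤ t → u t ≤ c + ∫ s in (0 : ℝ)..t, (a * u s + b * √(u s)))
    {t : ℝ} (ht : 0 ≤ t) :
    u t ≤ gronwallBound √c (a / 2) (b / 2) t ^ 2 := by
  set g : ℝ → ℝ := fun s => a * u s + b * √(u s)
  set v : ℝ → ℝ := fun x => c + ∫ s in (0 : ℝ)..x, g s
  have hg : ContinuousOn g (Ici 0) :=
    (continuousOn_const.mul hu).add (continuousOn_const.mul hu.sqrt)
  have hg_int : ∀ x, 0 ≤ x → IntervalIntegrable g volume 0 x := fun x hx =>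
    (hg.mono fun s hs => by rw [uIcc_of_le hx] at hs; exact hs.1).intervalIntegrable
  have hv : ContinuousOn v (Icc 0 t) := by
    rw [← uIcc_of_le ht]
    exact (intervalIntegral.continuousOn_primitive_interval' (hg_int t ht)
      left_mem_uIcc).const_add c
  have hpos : ∀ x ∈ Ico 0 t, 0 < v x := fun x hx =>
    add_pos_of_pos_of_nonneg hc <| intervalIntegral.integral_nonneg hx.1 fun s hs =>
      add_nonneg (mul_nonneg ha (hu0 s hs.1)) (mul_nonneg hb (sqrt_nonneg _))
  have hderiv : ∀ x ∈ Ico 0 t, HasDerivWithinAt v (g x) (Ici x) x := fun x hx =>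
    (intervalIntegral.integral_hasDerivWithinAt_right (hg_int x hx.1)
      ((hg.mono (Ioi_subset_Ici hx.1)).stronglyMeasurableAtFilter_nhdsWithin measurableSet_Ioi x)
      ((hg x hx.1).mono (Ioi_subset_Ici hx.1))).const_add c
  have hle : ∀ x ∈ Ico 0 t, g x ≤ a * v x + b * √(v x) := fun x hx => by
    have huv : u x ≤ v x := hineq x hx.1
    show a * u x + b * √(u x) ≤ _
    gcongr
  have hvt := sqrt_le_gronwallBound_of_deriv_le hv hpos hderiv hle t ⟨ht, le_rfl⟩
  simp only [v, intervalIntegral.integral_same, add_zero, sub_zero] at hvt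
  calc u t ≤ v t := hineq t ht
    _ = √(v t) ^ 2 := (sq_sqrt ((hu0 t ht).trans (hineq t ht))).symm
    _ ≤ _ := pow_le_pow_left₀ (sqrt_nonneg _) hvt 2

theorem gronwallBound_half {δ a b t : ℝ} (ha : a ≠ 0) :
    gronwallBound δ (a / 2) (b / 2) t = δ * exp (a * t / 2) + b * (exp (a * t / 2) - 1) / a := by
  rw [gronwallBound_of_K_ne_0 (by positivity)]
  field_simp

/-- **Generalized Grönwall inequality.**
If `u : [0,∞) → [0,∞)` is continuous and satisfies
`u(t) ≤ c + ∫₀ᵗ (a u(s) + b √(u(s))) ds` for all `t ≥ 0` (with `a > 0`, `b, c ≥ 0`), then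
`u(t) ≤ (√c exp(at/2) + b (exp(at/2) − 1)/a)²` for all `t ≥ 0`. -/
theorem generalized_gronwall
    (a b c : ℝ) (ha : 0 < a) (hb : 0 ≤ b) (hc : 0 ≤ c)
    (u : ℝ → ℝ) (hu : ContinuousOn u (Set.Ici 0))
    (hu0 : ∀ t, 0 ≤ t → 0 ≤ u t)
    (hineq : ∀ t, 0 ≤ t →
      u t ≤ c + ∫ s in (0:ℝ)..t, (a * u s + b * Real.sqrt (u s))) :
    ∀ t, 0 ≤ t →
      u t ≤ (Real.sqrt c * Real.exp (a * t / 2)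
              + b * (Real.exp (a * t / 2) - 1) / a) ^ 2 := by
  intro t ht
  have hbound : ∀ ε ∈ Ioi (0 : ℝ),
      u t ≤ (√(c + ε) * exp (a * t / 2) + b * (exp (a * t / 2) - 1) / a) ^ 2 := fun ε hε => by
    rw [← gronwallBound_half ha.ne']
    exact le_sq_gronwallBound_of_le_add_integral ha.le hb (add_pos_of_nonneg_of_pos hc hε) hu hu0
      (fun s hs => (hineq s hs).trans (by linarith [mem_Ioi.1 hε])) ht
  have hcont : Continuous fun ε =>
      (√(c + ε) * exp (a * t / 2) + b * (exp (a * t / 2) - 1) / a) ^ 2 := by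
    fun_prop
  exact ge_of_tendsto ((hcont.tendsto' 0 _ (by simp)).mono_left nhdsWithin_le_nhds)
    (eventually_nhdsWithin_of_forall hbound)
end

section
/- Let W : I² → ℝ be (A₁,α)-Hölder with α ∈ (0,1], and for n ∈ ℕ let Wₙ be the sampled step kernel Wₙ(u,v) = W(u_i, u_j) for (u,v) ∈ I_i × I_j. Then ‖W − Wₙ‖²_{L²(I²)} ≤ A₁² · (2^{2α+2} − 2) / ((2α+1)(2α+2)) · n^{−2α}. -/
open MeasureTheory Filter Set
open scoped ENNReal NNReal

/-!
The offset of `u` in its cell is `u - uᵢ = fract (n u) / n`, so the Hölder bound gives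
`|W - Wₙ|² ≤ A₁² n^{-2α} (fract (n u) + fract (n v))^{2α}` on `I²`. The map `u ↦ fract (n u)`
preserves Lebesgue measure on `[0,1]` (it runs once through `[0,1)` on each of the `n` cells),
so the integral of the bound is `A₁² n^{-2α} ∫₀¹∫₀¹ (s + t)^{2α} ds dt`, whose value is the
stated constant.
-/

theorem sub_stepPt {n : ℕ} (hn : n ≠ 0) (u : ℝ) : u - stepPt n u = Int.fract (n * u) / n := by
  rw [stepPt, Int.fract, sub_div, mul_div_cancel_left₀ _ (Nat.cast_ne_zero.mpr hn)]

theorem stepPt_mem_Icc (n : ℕ) {u : ℝ} (hu : u ∈ Icc (0:ℝ) 1) : stepPt n u ∈ Icc (0:ℝ) 1 := by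
  have hn : (0:ℝ) ≤ n := n.cast_nonneg
  refine ⟨div_nonneg (Int.cast_nonneg (Int.floor_nonneg.mpr (mul_nonneg hn hu.1))) hn,
    div_le_one_of_le₀ ?_ hn⟩
  calc (⌊(n:ℝ) * u⌋ : ℝ) ≤ n * u := Int.floor_le _
    _ ≤ n := mul_le_of_le_one_right hn hu.2

theorem sq_sub_sampKernel_le {A α : ℝ} {W : ℝ → ℝ → ℝ}
    (hW : ∀ u₁ ∈ Icc (0:ℝ) 1, ∀ u₂ ∈ Icc (0:ℝ) 1, ∀ v₁ ∈ Icc (0:ℝ) 1, ∀ v₂ ∈ Icc (0:ℝ) 1,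
      |W u₂ v₂ - W u₁ v₁| ≤ A * (|u₂ - u₁| + |v₂ - v₁|) ^ α)
    {n : ℕ} (hn : n ≠ 0) {u v : ℝ} (hu : u ∈ Icc (0:ℝ) 1) (hv : v ∈ Icc (0:ℝ) 1) :
    (W u v - sampKernel W n u v) ^ 2
      ≤ A ^ 2 * (n : ℝ) ^ (-(2 * α)) * (Int.fract (n * u) + Int.fract (n * v)) ^ (2 * α) := by
  have hn0 : (0:ℝ) ≤ n := n.cast_nonneg
  set F := Int.fract (n * u) + Int.fract (n * v)
  have hF : 0 ≤ F := add_nonneg (Int.fract_nonneg _) (Int.fract_nonneg _)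
  have hHolder := hW _ (stepPt_mem_Icc n hu) u hu _ (stepPt_mem_Icc n hv) v hv
  rw [sub_stepPt hn, sub_stepPt hn, abs_of_nonneg (div_nonneg (Int.fract_nonneg _) hn0),
    abs_of_nonneg (div_nonneg (Int.fract_nonneg _) hn0), ← add_div] at hHolder
  calc (W u v - sampKernel W n u v) ^ 2 = |W u v - sampKernel W n u v| ^ 2 := (sq_abs _).symm
    _ ≤ (A * (F / n) ^ α) ^ 2 := pow_le_pow_left₀ (abs_nonneg _) hHolder 2
    _ = A ^ 2 * (n : ℝ) ^ (-(2 * α)) * F ^ (2 * α) := by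
      rw [mul_pow, ← Real.rpow_natCast ((F / n) ^ α), ← Real.rpow_mul (div_nonneg hF hn0),
        Real.div_rpow hF hn0, Real.rpow_neg hn0, Nat.cast_ofNat, mul_comm α 2]
      ring

theorem sq_toReal_eLpNorm_two_le {X : Type*} [MeasurableSpace X] {μ : Measure X} {f g : X → ℝ}
    (hg : Integrable g μ) (hfg : ∀ᵐ x ∂μ, f x ^ 2 ≤ g x) :
    (eLpNorm f 2 μ).toReal ^ 2 ≤ ∫ x, g x ∂μ := by
  have hg0 : 0 ≤ᵐ[μ] g := hfg.mono fun x hx => (sq_nonneg _).trans hx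
  have hsq : eLpNorm f 2 μ ^ 2 ≤ ENNReal.ofReal (∫ x, g x ∂μ) := by
    have hpow := eLpNorm_nnreal_pow_eq_lintegral (f := f) (μ := μ) (p := 2) two_ne_zero
    simp only [ENNReal.coe_ofNat, NNReal.coe_ofNat, ENNReal.rpow_ofNat] at hpow
    rw [hpow, ofReal_integral_eq_lintegral_ofReal hg hg0]
    refine lintegral_mono_ae (hfg.mono fun x hx => ?_)
    rw [Real.enorm_eq_ofReal_abs, ← ENNReal.ofReal_pow (abs_nonneg _), sq_abs]
    exact ENNReal.ofReal_le_ofReal hx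
  calc (eLpNorm f 2 μ).toReal ^ 2 = (eLpNorm f 2 μ ^ 2).toReal := (ENNReal.toReal_pow _ _).symm
    _ ≤ (ENNReal.ofReal (∫ x, g x ∂μ)).toReal := ENNReal.toReal_mono ENNReal.ofReal_ne_top hsq
    _ = ∫ x, g x ∂μ := ENNReal.toReal_ofReal (integral_nonneg_of_ae hg0)

theorem intervalIntegral_comp_fract_mul {E : Type*} [NormedAddCommGroup E] [NormedSpace ℝ E]
    {g : ℝ → E} (hg : IntervalIntegrable g volume 0 1) {n : ℕ} (hn : n ≠ 0) :
    ∫ u in (0:ℝ)..1, g (Int.fract (n * u)) = ∫ t in (0:ℝ)..1, g t := by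
  have hfract : EqOn (fun x => g (Int.fract x)) g (uIoo 0 1) := fun x hx => by
    rw [uIoo_of_le zero_le_one] at hx
    simp only [Int.fract_eq_self.mpr ⟨hx.1.le, hx.2⟩]
  have hper : Function.Periodic (fun x => g (Int.fract x)) 1 := (Int.fract_periodic ℝ).comp g
  have hint := hper.intervalIntegrable₀ one_ne_zero (hg.congr_uIoo hfract.symm)
  have hn' : (n : ℝ) ≠ 0 := Nat.cast_ne_zero.mpr hn
  calc ∫ u in (0:ℝ)..1, g (Int.fract (n * u))
      = (n : ℝ)⁻¹ • ∫ x in (0:ℝ)..0 + (n : ℤ) • (1 : ℝ), g (Int.fract x) := by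
        rw [intervalIntegral.integral_comp_mul_left (fun x => g (Int.fract x)) hn']
        simp
    _ = ∫ t in (0:ℝ)..1, g t := by
        rw [hper.intervalIntegral_add_zsmul_eq _ _ hint, zero_add,
          intervalIntegral.integral_congr_uIoo hfract, natCast_zsmul, ← Nat.cast_smul_eq_nsmul ℝ,
          inv_smul_smul₀ hn']

section FractSquare

variable {E : Type*} [NormedAddCommGroup E] {G : ℝ → ℝ → E}

theorem μI2_eq_prod :
    μI2 = (volume.restrict (Icc (0:ℝ) 1)).prod (volume.restrict (Icc (0:ℝ) 1)) := by
  rw [μI2, Measure.volume_eq_prod, Measure.prod_restrict]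

theorem integrable_comp_fract_mul_μI2 (hG : Continuous G.uncurry) (n : ℕ) :
    Integrable (fun q : ℝ × ℝ => G (Int.fract (n * q.1)) (Int.fract (n * q.2))) μI2 := by
  have hmeas : Measurable fun q : ℝ × ℝ => (Int.fract (n * q.1), Int.fract (n * q.2)) := by
    fun_prop
  have hsquare : IsCompact (Icc (0:ℝ) 1 ×ˢ Icc (0:ℝ) 1) := isCompact_Icc.prod isCompact_Icc
  obtain ⟨C, hC⟩ := hsquare.exists_bound_of_continuousOn hG.continuousOn
  refine IntegrableOn.of_bound hsquare.measure_lt_top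
    (hG.stronglyMeasurable.comp_measurable hmeas).aestronglyMeasurable C
    (ae_of_all _ fun q => hC (_, _) ?_)
  exact ⟨⟨Int.fract_nonneg _, (Int.fract_lt_one _).le⟩,
    ⟨Int.fract_nonneg _, (Int.fract_lt_one _).le⟩⟩

theorem integral_comp_fract_mul_μI2 [NormedSpace ℝ E] (hG : Continuous G.uncurry) {n : ℕ}
    (hn : n ≠ 0) :
    ∫ q, G (Int.fract (n * q.1)) (Int.fract (n * q.2)) ∂μI2
      = ∫ s in (0:ℝ)..1, ∫ t in (0:ℝ)..1, G s t := by
  have hint := integrable_comp_fract_mul_μI2 hG n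
  rw [μI2_eq_prod] at hint ⊢
  rw [integral_prod _ hint]
  simp only [integral_Icc_eq_integral_Ioc, ← intervalIntegral.integral_of_le zero_le_one]
  simp_rw [intervalIntegral_comp_fract_mul ((hG.uncurry_left _).intervalIntegrable 0 1) hn]
  have hinner : Continuous fun s => ∫ t in (0:ℝ)..1, G s t :=
    intervalIntegral.continuous_parametric_intervalIntegral_of_continuous' hG 0 1
  exact intervalIntegral_comp_fract_mul (hinner.intervalIntegrable 0 1) hn

end FractSquare

theorem integral_integral_add_rpow {β : ℝ} (hβ : -1 < β) :
    ∫ s in (0:ℝ)..1, ∫ t in (0:ℝ)..1, (s + t) ^ β = (2 ^ (β + 2) - 2) / ((β + 1) * (β + 2)) := by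
  have hβ' : -1 < β + 1 := by linarith
  have hcont : Continuous fun x : ℝ => x ^ (β + 1) := Real.continuous_rpow_const (by linarith)
  have inner (s : ℝ) :
      ∫ t in (0:ℝ)..1, (s + t) ^ β = ((s + 1) ^ (β + 1) - s ^ (β + 1)) / (β + 1) := by
    rw [intervalIntegral.integral_comp_add_left (· ^ β), add_zero, integral_rpow (Or.inl hβ)]
  have hshift : ∫ s in (0:ℝ)..1, (s + 1) ^ (β + 1) = (2 ^ (β + 2) - 1) / (β + 2) := by
    rw [intervalIntegral.integral_comp_add_right (· ^ (β + 1)), integral_rpow (Or.inl hβ')]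
    norm_num [add_assoc]
  simp_rw [inner]
  rw [intervalIntegral.integral_div, intervalIntegral.integral_sub
      (Continuous.intervalIntegrable (u := fun x : ℝ => (x + 1) ^ (β + 1))
        (hcont.comp (continuous_add_const 1)) 0 1) (hcont.intervalIntegrable 0 1),
    hshift, integral_rpow (Or.inl hβ')]
  have h1 : β + 1 ≠ 0 := by linarith
  have h2 : β + 1 + 1 ≠ 0 := by linarith
  rw [Real.zero_rpow h2, Real.one_rpow, add_assoc β 1 1, one_add_one_eq_two]
  field_simp
  ring

theorem sampKernel_L2_error_general
    (A₁ α : ℝ) (hα0 : 0 < α)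
    (W : ℝ → ℝ → ℝ)
    (hWHolder : ∀ u₁ ∈ Set.Icc (0:ℝ) 1, ∀ u₂ ∈ Set.Icc (0:ℝ) 1,
      ∀ v₁ ∈ Set.Icc (0:ℝ) 1, ∀ v₂ ∈ Set.Icc (0:ℝ) 1,
        |W u₂ v₂ - W u₁ v₁| ≤ A₁ * (|u₂ - u₁| + |v₂ - v₁|) ^ α)
    (n : ℕ) (hn : 0 < n) :
    ((eLpNorm (fun q : ℝ × ℝ => W q.1 q.2 - sampKernel W n q.1 q.2) 2 μI2).toReal) ^ 2
      ≤ A₁ ^ 2 * (((2:ℝ) ^ (2 * α + 2) - 2) / ((2 * α + 1) * (2 * α + 2)))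
          * (n : ℝ) ^ (-(2 * α)) := by
  set G : ℝ → ℝ → ℝ := fun s t => (s + t) ^ (2 * α)
  set c : ℝ := A₁ ^ 2 * (n : ℝ) ^ (-(2 * α))
  have hG : Continuous G.uncurry :=
    (Real.continuous_rpow_const (by positivity)).comp (continuous_fst.add continuous_snd)
  have hbound : ∀ᵐ q ∂μI2, (W q.1 q.2 - sampKernel W n q.1 q.2) ^ 2
      ≤ c * G (Int.fract (n * q.1)) (Int.fract (n * q.2)) :=
    ae_restrict_of_forall_mem (measurableSet_Icc.prod measurableSet_Icc) fun q hq =>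
      sq_sub_sampKernel_le hWHolder hn.ne' hq.1 hq.2
  calc _ ≤ ∫ q, c * G (Int.fract (n * q.1)) (Int.fract (n * q.2)) ∂μI2 :=
        sq_toReal_eLpNorm_two_le ((integrable_comp_fract_mul_μI2 hG n).const_mul _) hbound
    _ = c * ∫ s in (0:ℝ)..1, ∫ t in (0:ℝ)..1, (s + t) ^ (2 * α) := by
        rw [integral_const_mul, integral_comp_fract_mul_μI2 hG hn.ne']
    _ = _ := by
        rw [integral_integral_add_rpow (by linarith)]
        ring

/-- **L² error of the sampled step kernel for Hölder graphons.**
If `W` is `(A₁,α)`-Hölder on `I²` then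
`‖W − Wₙ‖²_{L²(I²)} ≤ A₁² (2^{2α+2} − 2)/((2α+1)(2α+2)) · n^{−2α}`. -/
theorem sampKernel_L2_error
    (A₁ α : ℝ) (hα0 : 0 < α) (hα1 : α ≤ 1)
    (W : ℝ → ℝ → ℝ)
    (hWHolder : ∀ u₁ ∈ Set.Icc (0:ℝ) 1, ∀ u₂ ∈ Set.Icc (0:ℝ) 1,
      ∀ v₁ ∈ Set.Icc (0:ℝ) 1, ∀ v₂ ∈ Set.Icc (0:ℝ) 1,
        |W u₂ v₂ - W u₁ v₁| ≤ A₁ * (|u₂ - u₁| + |v₂ - v₁|) ^ α)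
    (n : ℕ) (hn : 0 < n) :
    ((eLpNorm (fun q : ℝ × ℝ => W q.1 q.2 - sampKernel W n q.1 q.2) 2 μI2).toReal) ^ 2
      ≤ A₁ ^ 2 * (((2:ℝ) ^ (2 * α + 2) - 2) / ((2 * α + 1) * (2 * α + 2)))
          * (n : ℝ) ^ (-(2 * α)) :=
  sampKernel_L2_error_general A₁ α hα0 W hWHolder n hn
end

section
/- Let W : I² → {0,1} be measurable with support W⁺ := {(u,v) ∈ I² : W(u,v) = 1}, and for n ∈ ℕ let Wₙ be the cell-intersection step kernel, i.e., Wₙ = 1 on I_i × I_j if (I_i × I_j) ∩ W⁺ ≠ ∅ and Wₙ = 0 on I_i × I_j otherwise. Then ‖W − Wₙ‖²_{L²(I²)} ≤ N_{1/n}(∂W⁺) / n², where N_{1/n}(∂W⁺) is the number of closed (1/n)-mesh squares [i/n,(i+1)/n]×[j/n,(j+1)/n] (i,j ∈ ℤ) that intersect the topological boundary ∂W⁺ of W⁺ in ℝ². -/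
open MeasureTheory Filter Set
open scoped ENNReal NNReal

/-!
Where `W` and `Wₙ` differ we must have `W = 0` and `Wₙ = 1`, so the convex cell square through
that point meets both `W⁺` and its complement, hence meets `∂W⁺`; it therefore lies in one of
the closed `(1/n)`-mesh squares counted by `N_{1/n}(∂W⁺)`. As `|W − Wₙ| ≤ 1`, the squared
`L²` error is at most the area of the union of these squares, i.e. at most `N_{1/n}(∂W⁺) / n²`.
-/

theorem IsPreconnected.inter_frontier_nonempty {X : Type*} [TopologicalSpace X] {s t : Set X}
    (hs : IsPreconnected s) (hst : (s ∩ t).Nonempty) (hst' : (s \ t).Nonempty) :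
    (s ∩ frontier t).Nonempty := by
  have := isPreconnected_iff_preconnectedSpace.mp hs
  obtain ⟨a, has, hat⟩ := hst
  obtain ⟨b, hbs, hbt⟩ := hst'
  obtain ⟨x, hx⟩ : (frontier (Subtype.val ⁻¹' t : Set s)).Nonempty :=
    nonempty_frontier_iff.mpr
      ⟨⟨⟨a, has⟩, hat⟩, fun h => hbt (show (⟨b, hbs⟩ : s) ∈ Subtype.val ⁻¹' t from h ▸ trivial)⟩
  exact ⟨x, x.2, continuous_subtype_val.frontier_preimage_subset t hx⟩

theorem finite_setOf_Icc_inter_nonempty {δ : ℝ} (hδ : 0 < δ) {s : Set ℝ}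
    (hs : Bornology.IsBounded s) :
    {k : ℤ | (Icc ((k : ℝ) * δ) (((k : ℝ) + 1) * δ) ∩ s).Nonempty}.Finite := by
  refine (finite_Icc (⌊sInf s / δ⌋ - 1) ⌈sSup s / δ⌉).subset ?_
  rintro k ⟨x, ⟨hkx, hxk⟩, hxs⟩
  obtain ⟨hax, hxb⟩ := hs.subset_Icc_sInf_sSup hxs
  have hlo : sInf s / δ ≤ k + 1 := by rw [div_le_iff₀ hδ]; linarith
  have hhi : (k : ℝ) ≤ sSup s / δ := by rw [le_div_iff₀ hδ]; linarith
  constructor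
  · have hfloor : (⌊sInf s / δ⌋ : ℝ) ≤ k + 1 := (Int.floor_le _).trans hlo
    have : ⌊sInf s / δ⌋ ≤ k + 1 := by exact_mod_cast hfloor
    omega
  · exact_mod_cast hhi.trans (Int.le_ceil _)

def meshSquare (δ : ℝ) (p : ℤ × ℤ) : Set (ℝ × ℝ) :=
  Icc ((p.1 : ℝ) * δ) (((p.1 : ℝ) + 1) * δ) ×ˢ Icc ((p.2 : ℝ) * δ) (((p.2 : ℝ) + 1) * δ)

def meshIndices (δ : ℝ) (Ω : Set (ℝ × ℝ)) : Set (ℤ × ℤ) :=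
  {p | (meshSquare δ p ∩ Ω).Nonempty}

def meshCover (δ : ℝ) (Ω : Set (ℝ × ℝ)) : Set (ℝ × ℝ) :=
  ⋃ p ∈ meshIndices δ Ω, meshSquare δ p

theorem meshCount_eq_ncard (δ : ℝ) (Ω : Set (ℝ × ℝ)) :
    meshCount δ Ω = (meshIndices δ Ω).ncard := rfl

theorem finite_meshIndices {δ : ℝ} (hδ : 0 < δ) {Ω : Set (ℝ × ℝ)} (hΩ : Bornology.IsBounded Ω) :
    (meshIndices δ Ω).Finite :=
  ((finite_setOf_Icc_inter_nonempty hδ hΩ.image_fst).prod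
      (finite_setOf_Icc_inter_nonempty hδ hΩ.image_snd)).subset <| by
    rintro p ⟨z, ⟨h1, h2⟩, hz⟩
    exact ⟨⟨z.1, h1, z, hz, rfl⟩, ⟨z.2, h2, z, hz, rfl⟩⟩

theorem volume_meshSquare {δ : ℝ} (hδ : 0 ≤ δ) (p : ℤ × ℤ) :
    volume (meshSquare δ p) = ENNReal.ofReal (δ ^ 2) := by
  rw [meshSquare, Measure.volume_eq_prod, Measure.prod_prod, Real.volume_Icc, Real.volume_Icc,
    ← ENNReal.ofReal_mul (by nlinarith)]
  ring_nf

theorem measurableSet_meshCover {δ : ℝ} (hδ : 0 < δ) {Ω : Set (ℝ × ℝ)}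
    (hΩ : Bornology.IsBounded Ω) : MeasurableSet (meshCover δ Ω) :=
  (finite_meshIndices hδ hΩ).measurableSet_biUnion fun _ _ =>
    measurableSet_Icc.prod measurableSet_Icc

theorem volume_meshCover_le {δ : ℝ} (hδ : 0 < δ) {Ω : Set (ℝ × ℝ)}
    (hΩ : Bornology.IsBounded Ω) :
    volume (meshCover δ Ω) ≤ ENNReal.ofReal (meshCount δ Ω * δ ^ 2) := by
  have hfin := finite_meshIndices hδ hΩ
  calc volume (meshCover δ Ω) ≤ ∑ p ∈ hfin.toFinset, volume (meshSquare δ p) := by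
        have hcover : meshCover δ Ω = ⋃ p ∈ hfin.toFinset, meshSquare δ p := by
          simp [meshCover]
        exact hcover ▸ measure_biUnion_finset_le _ _
    _ = ENNReal.ofReal (meshCount δ Ω * δ ^ 2) := by
        rw [Finset.sum_congr rfl fun p _ => volume_meshSquare hδ.le p, Finset.sum_const,
          nsmul_eq_mul, ENNReal.ofReal_mul (by positivity), ENNReal.ofReal_natCast,
          meshCount_eq_ncard, ncard_eq_toFinset_card _ hfin]

theorem eLpNorm_two_sq_le_measure {α : Type*} [MeasurableSpace α] {μ : Measure α}
    {f : α → ℝ} {E : Set α} (hE : MeasurableSet E) (hf : ∀ᵐ x ∂μ, ‖f x‖ ≤ E.indicator 1 x) :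
    eLpNorm f 2 μ ^ 2 ≤ μ E := by
  have h := eLpNorm_mono_ae_real (p := 2) hf
  rw [show (E.indicator 1 : α → ℝ) = E.indicator fun _ => (1 : ℝ) from rfl,
    eLpNorm_indicator_const hE two_ne_zero ENNReal.ofNat_ne_top] at h
  calc eLpNorm f 2 μ ^ 2 ≤ (‖(1 : ℝ)‖ₑ * μ E ^ (1 / (2 : ℝ≥0∞).toReal)) ^ 2 := by gcongr
    _ = μ E := by
        rw [enorm_one, one_mul, ← ENNReal.rpow_natCast, ← ENNReal.rpow_mul]
        norm_num

theorem mem_cell {n : ℕ} (hn : 0 < n) (u : ℝ) : u ∈ cell n u := by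
  have hn' : (0 : ℝ) < n := by exact_mod_cast hn
  constructor
  · rw [stepPt, div_le_iff₀ hn', mul_comm]
    exact Int.floor_le _
  · rw [stepPt, ← add_div, lt_div_iff₀ hn', mul_comm]
    exact Int.lt_floor_add_one _

theorem cell_prod_subset_meshSquare (n : ℕ) (u v : ℝ) :
    cell n u ×ˢ cell n v ⊆ meshSquare (1 / n) (⌊(n : ℝ) * u⌋, ⌊(n : ℝ) * v⌋) := by
  have hcell : ∀ w, cell n w ⊆ Icc (⌊(n : ℝ) * w⌋ * (1 / n)) ((⌊(n : ℝ) * w⌋ + 1) * (1 / n)) := by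
    intro w
    rw [cell, stepPt]
    convert Ico_subset_Icc_self using 2 <;> ring
  exact prod_mono (hcell u) (hcell v)

theorem frontier_supportSet_subset (W : ℝ → ℝ → ℝ) :
    frontier (supportSet W) ⊆ Icc (0 : ℝ) 1 ×ˢ Icc (0 : ℝ) 1 :=
  frontier_subset_closure.trans <| closure_minimal (fun _ hp => ⟨hp.1, hp.2.1⟩)
    (isClosed_Icc.prod isClosed_Icc)

theorem interKernel_eq_zero_or_one (W : ℝ → ℝ → ℝ) (n : ℕ) (u v : ℝ) :
    interKernel W n u v = 0 ∨ interKernel W n u v = 1 := by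
  unfold interKernel
  split_ifs <;> simp

theorem mem_meshCover_of_ne_interKernel {W : ℝ → ℝ → ℝ} (hWbin : ∀ u v, W u v = 0 ∨ W u v = 1)
    {n : ℕ} (hn : 0 < n) {u v : ℝ} (hu : u ∈ Icc (0 : ℝ) 1) (hv : v ∈ Icc (0 : ℝ) 1)
    (hne : W u v ≠ interKernel W n u v) :
    (u, v) ∈ meshCover (1 / n) (frontier (supportSet W)) := by
  have hcell : (u, v) ∈ cell n u ×ˢ cell n v := ⟨mem_cell hn u, mem_cell hn v⟩
  have hW1 : W u v ≠ 1 := fun h => hne <| by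
    rw [interKernel, if_pos ⟨(u, v), hcell, hu, hv, h⟩, h]
  have hmeet : ((cell n u ×ˢ cell n v) ∩ supportSet W).Nonempty := by
    by_contra h
    exact hne <| by rw [interKernel, if_neg h, (hWbin u v).resolve_right hW1]
  obtain ⟨z, hz, hzΩ⟩ := ((convex_Ico _ _).prod (convex_Ico _ _)).isPreconnected
    |>.inter_frontier_nonempty hmeet ⟨(u, v), hcell, fun h => hW1 h.2.2⟩
  exact mem_biUnion ⟨z, cell_prod_subset_meshSquare n u v hz, hzΩ⟩
    (cell_prod_subset_meshSquare n u v hcell)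

theorem norm_sub_interKernel_le_indicator {W : ℝ → ℝ → ℝ}
    (hWbin : ∀ u v, W u v = 0 ∨ W u v = 1) {n : ℕ} (hn : 0 < n) {u v : ℝ}
    (hu : u ∈ Icc (0 : ℝ) 1) (hv : v ∈ Icc (0 : ℝ) 1) :
    ‖W u v - interKernel W n u v‖ ≤
      (meshCover (1 / n) (frontier (supportSet W))).indicator 1 (u, v) := by
  by_cases hne : W u v = interKernel W n u v
  · rw [hne, sub_self, norm_zero]
    exact indicator_nonneg (fun _ _ => zero_le_one) _
  rw [indicator_of_mem (mem_meshCover_of_ne_interKernel hWbin hn hu hv hne), Pi.one_apply]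
  rcases hWbin u v with h | h <;> rcases interKernel_eq_zero_or_one W n u v with h' | h' <;>
    norm_num [h, h']

theorem interKernel_L2_error_general
    (W : ℝ → ℝ → ℝ)
    (hWbin : ∀ u v, W u v = 0 ∨ W u v = 1)
    (n : ℕ) (hn : 0 < n) :
    ((eLpNorm (fun q : ℝ × ℝ => W q.1 q.2 - interKernel W n q.1 q.2) 2 μI2).toReal) ^ 2
      ≤ (meshCount (1 / n) (frontier (supportSet W)) : ℝ) / (n : ℝ) ^ 2 := by
  set Ω := frontier (supportSet W)
  have hδ : (0 : ℝ) < 1 / n := by positivity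
  have hΩ : Bornology.IsBounded Ω :=
    (isCompact_Icc.prod isCompact_Icc).isBounded.subset (frontier_supportSet_subset W)
  have hpt : ∀ᵐ q ∂μI2,
      ‖W q.1 q.2 - interKernel W n q.1 q.2‖ ≤ (meshCover (1 / n) Ω).indicator 1 q := by
    rw [μI2, ae_restrict_iff' (measurableSet_Icc.prod measurableSet_Icc)]
    exact ae_of_all _ fun q hq => norm_sub_interKernel_le_indicator hWbin hn hq.1 hq.2
  have hvol : μI2 (meshCover (1 / n) Ω) ≤ ENNReal.ofReal (meshCount (1 / n) Ω * (1 / n) ^ 2) :=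
    (Measure.restrict_apply_le _ _).trans (volume_meshCover_le hδ hΩ)
  calc _ = (eLpNorm (fun q : ℝ × ℝ => W q.1 q.2 - interKernel W n q.1 q.2) 2 μI2 ^ 2).toReal :=
        (ENNReal.toReal_pow _ _).symm
    _ ≤ (ENNReal.ofReal (meshCount (1 / n) Ω * (1 / n) ^ 2)).toReal :=
        ENNReal.toReal_mono ENNReal.ofReal_ne_top
          ((eLpNorm_two_sq_le_measure (measurableSet_meshCover hδ hΩ) hpt).trans hvol)
    _ = _ := by rw [ENNReal.toReal_ofReal (by positivity)]; ring

/-- **L² error of the cell-intersection step kernel.**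
For a measurable `{0,1}`-valued graphon `W` with support `W⁺`,
`‖W − Wₙ‖²_{L²(I²)} ≤ N_{1/n}(∂W⁺) / n²`, where `N_{1/n}(∂W⁺)` counts the closed `(1/n)`-mesh
squares meeting the topological boundary of `W⁺`. -/
theorem interKernel_L2_error
    (W : ℝ → ℝ → ℝ) (hWm : Measurable (Function.uncurry W))
    (hWbin : ∀ u v, W u v = 0 ∨ W u v = 1)
    (n : ℕ) (hn : 0 < n) :
    ((eLpNorm (fun q : ℝ × ℝ => W q.1 q.2 - interKernel W n q.1 q.2) 2 μI2).toReal) ^ 2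
      ≤ (meshCount (1 / n) (frontier (supportSet W)) : ℝ) / (n : ℝ) ^ 2 :=
  interKernel_L2_error_general W hWbin n hn
end
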